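/- arXiv:1306.5257 — 10 statements merged into one kernel-verified Lean document; each statement's English description precedes it below -/
import Mathlib

section
/- If a₁, ..., aₙ are positive integers with a₁³ + a₂³ + ⋯ + aₙ³ = (a₁ + a₂ + ⋯ + aₙ)², then every aₖ satisfies aₖ ≤ n². -/
theorem cs_set_entry_bound (n : ℕ) (a : Fin n → ℤ) (hpos : ∀ k, 0 < a k)
    (h : ∑ k, (a k) ^ 3 = (∑ k, a k) ^ 2) :
    ∀ k, a k ≤ (n : ℤ) ^ 2 := by
  intro k
  haveI : Nonempty (Fin n) := ⟨k⟩
  obtain ⟨j, -, hj⟩ := Finset.exists_max_image Finset.univ a ⟨k, Finset.mem_univ k⟩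
  have hjk : a k ≤ a j := hj k (Finset.mem_univ k)
  have hS : (∑ i, a i) ≤ n * a j := by
    calc (∑ i, a i) ≤ ∑ _i : Fin n, a j :=
          Finset.sum_le_sum fun i _ => hj i (Finset.mem_univ i)
      _ = n * a j := by simp [Finset.sum_const, mul_comm]
  have hS0 : 0 < ∑ i, a i := Finset.sum_pos (fun i _ => hpos i) Finset.univ_nonempty
  have hcube : (a j) ^ 3 ≤ ∑ i, (a i) ^ 3 :=
    Finset.single_le_sum (f := fun i => (a i) ^ 3) (fun i _ => (pow_pos (hpos i) 3).le) (Finset.mem_univ j)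
  have hsq : (∑ i, a i) ^ 2 ≤ (n * a j) ^ 2 := by
    apply pow_le_pow_left₀ hS0.le hS
  have hkey : (a j) ^ 3 ≤ (n : ℤ) ^ 2 * (a j) ^ 2 := by
    calc (a j) ^ 3 ≤ (∑ i, a i) ^ 2 := h ▸ hcube
      _ ≤ (n * a j) ^ 2 := hsq
      _ = (n : ℤ) ^ 2 * (a j) ^ 2 := by ring
  have hjpos := hpos j
  nlinarith [sq_nonneg (a j), mul_pos hjpos hjpos, hjk]
end

section
/- For each natural n, there are only finitely many n-tuples (a₁, ..., aₙ) of positive integers with a₁ ≤ a₂ ≤ ⋯ ≤ aₙ satisfying a₁³ + ⋯ + aₙ³ = (a₁ + ⋯ + aₙ)². -/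
theorem finitely_many_positive_cs_sets (n : ℕ) :
    {a : Fin n → ℤ | (∀ k, 0 < a k) ∧ Monotone a ∧
      ∑ k, (a k) ^ 3 = (∑ k, a k) ^ 2}.Finite := by
  rcases Nat.eq_zero_or_pos n with h0 | hn
  · subst h0
    apply Set.Finite.subset (Set.finite_singleton (fun _ : Fin 0 => (0:ℤ)))
    intro a _
    simp only [Set.mem_singleton_iff]
    funext k
    exact k.elim0
  · apply Set.Finite.subset
      (Set.Finite.pi (fun _ : Fin n => Set.finite_Icc (1:ℤ) ((n:ℤ)^2)))
    rintro a ⟨hpos, hmono, hsum⟩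
    have hm : n - 1 < n := by omega
    set m : Fin n := ⟨n - 1, hm⟩ with hmdef
    have hle : ∀ j : Fin n, a j ≤ a m := fun j => hmono (by
      simp only [Fin.le_def, hmdef]; omega)
    have hmpos : 0 < a m := hpos m
    have hS0 : 0 ≤ ∑ k, a k :=
      Finset.sum_nonneg fun k _ => (hpos k).le
    have hSle : ∑ k, a k ≤ (n : ℤ) * a m := by
      calc ∑ k, a k ≤ ∑ _k : Fin n, a m := Finset.sum_le_sum fun k _ => hle k
        _ = (n : ℤ) * a m := by simp [mul_comm]
    have hcube : a m ^ 3 ≤ ∑ k, (a k) ^ 3 := by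
      apply Finset.single_le_sum (f := fun k => (a k) ^ 3)
      · intro k _
        exact pow_nonneg (hpos k).le 3
      · exact Finset.mem_univ m
    have hsq : (∑ k, a k) ^ 2 ≤ ((n : ℤ) * a m) ^ 2 := by
      apply pow_le_pow_left₀ hS0 hSle
    have hkey : a m ^ 3 ≤ (n : ℤ) ^ 2 * a m ^ 2 := by
      calc a m ^ 3 ≤ (∑ k, a k) ^ 2 := hsum ▸ hcube
        _ ≤ ((n : ℤ) * a m) ^ 2 := hsq
        _ = (n : ℤ) ^ 2 * a m ^ 2 := by ring
    have hMn : a m ≤ (n : ℤ) ^ 2 := by nlinarith [sq_nonneg (a m)]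
    intro k _
    exact ⟨hpos k, (hle k).trans hMn⟩
end

section
/- If a₁ < a₂ < ⋯ < aₙ are positive integers, then a₁³ + a₂³ + ⋯ + aₙ³ ≥ (a₁ + a₂ + ⋯ + aₙ)², with equality if and only if aₖ = k for all 1 ≤ k ≤ n. -/
/-!
Write `D(a) = ∑ aₖ³ - (∑ aₖ)²`. Splitting off the last term `M = aₙ` of the sequence, with `S` the
sum of the others,
`D(a₁, …, aₙ) = D(a₁, …, aₙ₋₁) + M (M² - M - 2S)`.
Strict monotonicity gives `aₖ ≤ M - (n - k)`, so `2S ≤ M² - M - (M - n)(M - n - 1) ≤ M² - M`, and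
both summands are nonnegative by induction. Equality forces both to vanish: inductively
`aₖ = k` for `k < n`, hence `M² - M = 2S = n(n - 1)`, i.e. `M = n`.
-/

open Finset

def cubeDefect {n : ℕ} (a : Fin n → ℤ) : ℤ :=
  ∑ k, a k ^ 3 - (∑ k, a k) ^ 2

lemma cubeDefect_succ {m : ℕ} (a : Fin (m + 1) → ℤ) :
    cubeDefect a = cubeDefect (fun i => a i.castSucc) +
      a (Fin.last m) * (a (Fin.last m) ^ 2 - a (Fin.last m) - 2 * ∑ i : Fin m, a i.castSucc) := by
  simp only [cubeDefect, Fin.sum_univ_castSucc]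
  ring

lemma two_mul_sum_val_add_one (n : ℕ) : 2 * ∑ i : Fin n, ((i : ℤ) + 1) = n * (n + 1) := by
  induction n with
  | zero => simp
  | succ m ih =>
    rw [Fin.sum_univ_castSucc, mul_add]
    simp only [Fin.val_castSucc, Fin.val_last, ih]
    push_cast
    ring

lemma StrictMono.monotone_sub_val {n : ℕ} {a : Fin n → ℤ} (hmono : StrictMono a) :
    Monotone fun i : Fin n => a i - (i : ℤ) := by
  cases n with
  | zero => exact fun i => i.elim0
  | succ m =>
    rw [Fin.monotone_iff_le_succ]
    intro i
    have hstep : a i.castSucc < a i.succ := hmono i.castSucc_lt_succ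
    simp only [Fin.val_castSucc, Fin.val_succ]
    push_cast
    omega

lemma val_add_one_le_of_strictMono {n : ℕ} {a : Fin n → ℤ} (hpos : ∀ k, 0 < a k)
    (hmono : StrictMono a) (k : Fin n) : (k : ℤ) + 1 ≤ a k := by
  cases n with
  | zero => exact k.elim0
  | succ m =>
    have h := hmono.monotone_sub_val (Fin.zero_le k)
    have h0 := hpos 0
    simp only [Fin.val_zero, Nat.cast_zero, sub_zero] at h
    omega

lemma two_mul_sum_le_sq_sub_self {m : ℕ} (b : Fin m → ℤ) (M : ℤ)
    (hb : ∀ i, b i + m ≤ M + i) (hM : (m : ℤ) < M) :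
    2 * ∑ i, b i ≤ M ^ 2 - M := by
  have hsum : ∑ i, b i ≤ ∑ i : Fin m, (M - m - 1 + ((i : ℤ) + 1)) :=
    sum_le_sum fun i _ => by linarith [hb i]
  have hrun : 2 * ∑ i : Fin m, (M - m - 1 + ((i : ℤ) + 1)) = 2 * m * (M - m - 1) + m * (m + 1) := by
    rw [sum_add_distrib, mul_add, two_mul_sum_val_add_one, sum_const, card_univ, Fintype.card_fin,
      nsmul_eq_mul]
    ring
  nlinarith [mul_nonneg (sub_nonneg.2 hM.le) (sub_nonneg.2 (Int.add_one_le_of_lt hM))]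

lemma two_mul_sum_castSucc_le {m : ℕ} {a : Fin (m + 1) → ℤ} (hpos : ∀ k, 0 < a k)
    (hmono : StrictMono a) :
    2 * ∑ i : Fin m, a i.castSucc ≤ a (Fin.last m) ^ 2 - a (Fin.last m) := by
  refine two_mul_sum_le_sq_sub_self _ _ (fun i => ?_) ?_
  · have h := hmono.monotone_sub_val (Fin.le_last i.castSucc)
    simp only [Fin.val_castSucc, Fin.val_last] at h
    linarith
  · simpa using val_add_one_le_of_strictMono hpos hmono (Fin.last m)

lemma StrictMono.comp_castSucc {m : ℕ} {a : Fin (m + 1) → ℤ} (hmono : StrictMono a) :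
    StrictMono fun i : Fin m => a i.castSucc :=
  hmono.comp Fin.strictMono_castSucc

lemma cubeDefect_nonneg {n : ℕ} (a : Fin n → ℤ) (hpos : ∀ k, 0 < a k) (hmono : StrictMono a) :
    0 ≤ cubeDefect a := by
  induction n with
  | zero => simp [cubeDefect]
  | succ m ih =>
    rw [cubeDefect_succ]
    have hlast := two_mul_sum_castSucc_le hpos hmono
    exact add_nonneg (ih _ (fun k => hpos _) hmono.comp_castSucc)
      (mul_nonneg (hpos _).le (by linarith))

lemma cubeDefect_eq_zero_iff {n : ℕ} (a : Fin n → ℤ) (hpos : ∀ k, 0 < a k)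
    (hmono : StrictMono a) : cubeDefect a = 0 ↔ ∀ k : Fin n, a k = (k : ℤ) + 1 := by
  induction n with
  | zero => simp [cubeDefect]
  | succ m ih =>
    have ihinit := ih _ (fun k => hpos _) hmono.comp_castSucc
    have hinit := cubeDefect_nonneg _ (fun k => hpos _) hmono.comp_castSucc
    have hlast := two_mul_sum_castSucc_le hpos hmono
    have hMpos : 0 < a (Fin.last m) := hpos _
    rw [cubeDefect_succ, Fin.forall_fin_succ']
    simp only [Fin.val_castSucc, Fin.val_last, ← ihinit]
    set M := a (Fin.last m)
    set S := ∑ i : Fin m, a i.castSucc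
    have hrun (hD : cubeDefect (fun i : Fin m => a i.castSucc) = 0) : 2 * S = m * (m + 1) := by
      simp only [S, ihinit.1 hD, two_mul_sum_val_add_one]
    constructor
    · intro h
      have hprod : 0 ≤ M * (M ^ 2 - M - 2 * S) := mul_nonneg hMpos.le (by linarith)
      have hD : cubeDefect (fun i : Fin m => a i.castSucc) = 0 := by linarith
      have hquad : M * (M ^ 2 - M - 2 * S) = 0 := by linarith
      have hsq : M ^ 2 - M - 2 * S = 0 := (mul_eq_zero.1 hquad).resolve_left hMpos.ne'
      have hfactor : (M - (m + 1)) * (M + m) = 0 := by linear_combination hsq + hrun hD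
      refine ⟨hD, ?_⟩
      have : M + m ≠ 0 := by positivity
      linear_combination (mul_eq_zero.1 hfactor).resolve_right this
    · rintro ⟨hD, hM⟩
      rw [hD, hrun hD, hM]
      ring

theorem cubes_ge_square_sum (n : ℕ) (a : Fin n → ℤ) (hpos : ∀ k, 0 < a k)
    (hmono : StrictMono a) :
    (∑ k, a k) ^ 2 ≤ ∑ k, (a k) ^ 3 ∧
      (∑ k, (a k) ^ 3 = (∑ k, a k) ^ 2 ↔ ∀ k : Fin n, a k = (k : ℤ) + 1) := by
  refine ⟨sub_nonneg.1 (cubeDefect_nonneg a hpos hmono), ?_⟩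
  rw [← sub_eq_zero]
  exact cubeDefect_eq_zero_iff a hpos hmono
end

section
/- If a₁ < a₂ < ⋯ < aₙ are positive integers satisfying a₁³ + ⋯ + aₙ³ = (a₁ + ⋯ + aₙ)², then aₖ = k for all k. In particular, ⟨1, 2, ..., n⟩ is the unique positive CS n-set with distinct elements. -/
lemma gap_lemma {N : ℕ} (a : Fin N → ℤ) (h : StrictMono a) :
    ∀ d : ℕ, ∀ i j : Fin N, (i : ℕ) + d = (j : ℕ) → a i + d ≤ a j := by
  intro d
  induction d with
  | zero =>
    intro i j hij
    have : i = j := Fin.ext (by omega)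
    simp [this]
  | succ d ih =>
    intro i j hij
    have hj' : (i : ℕ) + d < N := by omega
    have h1 := ih i ⟨(i : ℕ) + d, hj'⟩ rfl
    have h2 : a ⟨(i : ℕ) + d, hj'⟩ < a j := h (by simp [Fin.lt_def]; omega)
    push_cast
    push_cast at h1
    linarith

lemma key_lemma : ∀ n (a : Fin n → ℤ), (∀ k, 0 < a k) → StrictMono a →
    ((∑ k, a k) ^ 2 ≤ ∑ k, (a k) ^ 3) ∧
    (∑ k, (a k) ^ 3 = (∑ k, a k) ^ 2 → ∀ k : Fin n, a k = (k : ℤ) + 1) := by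
  intro n
  induction n with
  | zero => intro a _ _; simp
  | succ n ih =>
    intro a hpos hmono
    set m : ℤ := a (Fin.last n) with hm
    set b : Fin n → ℤ := fun k => a (Fin.castSucc k) with hb
    have hbpos : ∀ k, 0 < b k := fun k => hpos _
    have hbmono : StrictMono b := fun i j hij =>
      hmono (by simpa [Fin.castSucc_lt_castSucc_iff] using hij)
    obtain ⟨hIH1, hIH2⟩ := ih b hbpos hbmono
    set T : ℤ := ∑ k, b k with hT
    have hsplit : ∑ k, a k = T + m := by
      rw [Fin.sum_univ_castSucc]
    have hsplit3 : ∑ k : Fin (n+1), (a k) ^ 3 = (∑ k, (b k) ^ 3) + m ^ 3 := by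
      rw [Fin.sum_univ_castSucc]
    have hm1 : 1 ≤ m := hpos _
    -- m ≥ n + 1
    have hmn : (n : ℤ) + 1 ≤ m := by
      have h0 : (0 : ℕ) < n + 1 := Nat.succ_pos n
      have := gap_lemma a hmono n ⟨0, h0⟩ (Fin.last n) (by simp)
      have h1 : 1 ≤ a ⟨0, h0⟩ := hpos _
      linarith
    -- each b k ≤ m - (n - k)
    have hbk : ∀ k : Fin n, b k + ((n : ℤ) - (k : ℤ)) ≤ m := by
      intro k
      have hle := gap_lemma a hmono (n - (k : ℕ)) (Fin.castSucc k) (Fin.last n)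
        (by simp only [Fin.coe_castSucc, Fin.val_last]; omega)
      have hcast : ((n - (k : ℕ) : ℕ) : ℤ) = (n : ℤ) - (k : ℤ) := by
        have : (k : ℕ) ≤ n := le_of_lt k.isLt
        omega
      rw [hcast] at hle
      simpa [hb] using hle
    -- Gauss: ∑ k : Fin n, (k : ℤ) * 2 = n * (n - 1)
    have hgauss : (∑ k : Fin n, ((k : ℕ) : ℤ)) * 2 = (n : ℤ) * ((n : ℤ) - 1) := by
      rw [Fin.sum_univ_eq_sum_range (fun i => ((i : ℕ) : ℤ)) n]
      have := Finset.sum_range_id_mul_two n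
      have hc : (∑ i ∈ Finset.range n, (i : ℤ)) = ((∑ i ∈ Finset.range n, i : ℕ) : ℤ) := by
        push_cast; ring
      rw [hc]
      have h2 : ((∑ i ∈ Finset.range n, i) * 2 : ℕ) = n * (n - 1) := this
      rcases Nat.eq_zero_or_pos n with h0 | h0
      · simp [h0]
      · have : ((n : ℤ) - 1) = ((n - 1 : ℕ) : ℤ) := by omega
        rw [this]
        exact_mod_cast h2
    -- 2T ≤ m² - m
    have h2T : 2 * T ≤ m ^ 2 - m := by
      have hsum : T ≤ ∑ k : Fin n, (m - ((n : ℤ) - (k : ℕ))) := by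
        apply Finset.sum_le_sum
        intro k _
        have := hbk k
        linarith
      have hval : ∑ k : Fin n, (m - ((n : ℤ) - (k : ℕ))) =
          (n : ℤ) * m - (n : ℤ) * (n : ℤ) + ∑ k : Fin n, ((k : ℕ) : ℤ) := by
        rw [Finset.sum_sub_distrib, Finset.sum_sub_distrib]
        simp [Finset.sum_const, mul_comm]
        ring
      rw [hval] at hsum
      -- so 2T ≤ 2nm - 2n² + n(n-1) = 2nm - n² - n ≤ m² - m since m ≥ n+1
      nlinarith [hgauss, hmn, sq_nonneg (m - (n : ℤ) - 1), mul_nonneg (sub_nonneg.mpr hmn) (sub_nonneg.mpr hmn)]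
    have hcube : T ^ 2 + m * (m ^ 2 - m - 2 * T) + 2 * T * m + m ^ 2 = T ^ 2 + m ^ 3 := by
      ring
    have hnonneg : 0 ≤ m * (m ^ 2 - m - 2 * T) :=
      mul_nonneg (by linarith) (by linarith)
    constructor
    · rw [hsplit, hsplit3]
      nlinarith [hIH1, hnonneg]
    · intro heq
      rw [hsplit, hsplit3] at heq
      -- equality forces both slack terms zero
      have hz1 : ∑ k, (b k) ^ 3 = T ^ 2 := by nlinarith [hIH1, hnonneg]
      have hz2 : m * (m ^ 2 - m - 2 * T) = 0 := by nlinarith [hIH1, hnonneg]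
      have hmne : m ≠ 0 := by linarith
      have hz3 : m ^ 2 - m - 2 * T = 0 := by
        rcases mul_eq_zero.mp hz2 with h | h
        · exact absurd h hmne
        · exact h
      have hbeq : ∀ k : Fin n, b k = (k : ℤ) + 1 := hIH2 hz1
      have hTval : 2 * T = (n : ℤ) * (n : ℤ) + (n : ℤ) := by
        have : T = ∑ k : Fin n, (((k : ℕ) : ℤ) + 1) := by
          rw [hT]; exact Finset.sum_congr rfl fun k _ => hbeq k
        rw [this]
        rw [Finset.sum_add_distrib]
        simp [Finset.sum_const]
        nlinarith [hgauss]
      have hmeq : m = (n : ℤ) + 1 := by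
        have hfac : (m - ((n : ℤ) + 1)) * (m + (n : ℤ)) = 0 := by
          have hq : m ^ 2 - m = (n : ℤ) * (n : ℤ) + (n : ℤ) := by linarith
          linear_combination hq
        rcases mul_eq_zero.mp hfac with h | h
        · linarith
        · have : (0 : ℤ) ≤ (n : ℤ) := Int.natCast_nonneg n
          linarith
      intro k
      refine Fin.lastCases ?_ ?_ k
      · rw [← hm, hmeq]; simp
      · intro i
        have := hbeq i
        simpa [hb] using this

theorem unique_positive_distinct_cs_set (n : ℕ) (a : Fin n → ℤ)
    (hpos : ∀ k, 0 < a k) (hmono : StrictMono a)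
    (h : ∑ k, (a k) ^ 3 = (∑ k, a k) ^ 2) :
    ∀ k : Fin n, a k = (k : ℤ) + 1 := by
  exact (key_lemma n a hpos hmono).2 h
end

section
/- Let a be an integer and suppose 2(2a+1) = u² + v² + (u+v)² for some integers u, v. Then setting x = u+1 and y = u+v+1, one has a² + x³ + y³ = (a + x + y)². -/
theorem extend_by_two (a u v : ℤ) (h : 2 * (2 * a + 1) = u ^ 2 + v ^ 2 + (u + v) ^ 2) :
    a ^ 2 + (u + 1) ^ 3 + (u + v + 1) ^ 3 = (a + (u + 1) + (u + v + 1)) ^ 2 := by nlinarith [sq_nonneg (u+v), sq_nonneg u, sq_nonneg v, h, sq_nonneg a]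
end

section
/- For all integers r, s with 8s² − 5r² = 3, writing x = (3r+1)/2 and y = (3r−1)/2 (which are integers since r is odd), the five integers −x, −y, r−s, r, r+s have sum zero and sum of cubes zero. -/
theorem zero_sum_cs_five_family (r s x y : ℤ) (h : 8 * s ^ 2 - 5 * r ^ 2 = 3)
    (hx : 2 * x = 3 * r + 1) (hy : 2 * y = 3 * r - 1) :
    (-x) + (-y) + (r - s) + r + (r + s) = 0 ∧
      (-x) ^ 3 + (-y) ^ 3 + (r - s) ^ 3 + r ^ 3 + (r + s) ^ 3 = 0 := by
  constructor
  · linarith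
  · have h8 : 8 * ((-x) ^ 3 + (-y) ^ 3 + (r - s) ^ 3 + r ^ 3 + (r + s) ^ 3) = 0 := by
      linear_combination (6*r) * h
        - (4*x^2 + 2*x*(3*r+1) + (3*r+1)^2) * hx
        - (4*y^2 + 2*y*(3*r-1) + (3*r-1)^2) * hy
    linarith
end

section
/- There are infinitely many quintuples of distinct nonzero integers (a₁, ..., a₅) with a₁ + ⋯ + a₅ = 0 and a₁³ + ⋯ + a₅³ = 0 such that gcd(a₁, ..., a₅) = 1. -/
theorem infinitely_many_primitive_zero_sum_cs_five :
    {q : ℤ × ℤ × ℤ × ℤ × ℤ |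
      q.1 ≠ 0 ∧ q.2.1 ≠ 0 ∧ q.2.2.1 ≠ 0 ∧ q.2.2.2.1 ≠ 0 ∧ q.2.2.2.2 ≠ 0 ∧
      q.1 ≠ q.2.1 ∧ q.1 ≠ q.2.2.1 ∧ q.1 ≠ q.2.2.2.1 ∧ q.1 ≠ q.2.2.2.2 ∧
      q.2.1 ≠ q.2.2.1 ∧ q.2.1 ≠ q.2.2.2.1 ∧ q.2.1 ≠ q.2.2.2.2 ∧
      q.2.2.1 ≠ q.2.2.2.1 ∧ q.2.2.1 ≠ q.2.2.2.2 ∧ q.2.2.2.1 ≠ q.2.2.2.2 ∧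
      q.1 + q.2.1 + q.2.2.1 + q.2.2.2.1 + q.2.2.2.2 = 0 ∧
      q.1 ^ 3 + q.2.1 ^ 3 + q.2.2.1 ^ 3 + q.2.2.2.1 ^ 3 + q.2.2.2.2 ^ 3 = 0 ∧
      Int.gcd q.1 (Int.gcd q.2.1 (Int.gcd q.2.2.1 (Int.gcd q.2.2.2.1 q.2.2.2.2))) = 1
      }.Infinite := by
  apply Set.infinite_of_injective_forall_mem
    (f := fun n : ℕ => ((-2*((n:ℤ)+1)^2-5*((n:ℤ)+1)-2, -2*((n:ℤ)+1)^2-3*((n:ℤ)+1), -1,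
      2*((n:ℤ)+1)^2+4*((n:ℤ)+1)+1, 2*((n:ℤ)+1)^2+4*((n:ℤ)+1)+2) : ℤ × ℤ × ℤ × ℤ × ℤ))
  · intro a b hab
    simp only [Prod.mk.injEq] at hab
    have h := hab.1
    have : (a:ℤ) = b := by nlinarith [h]
    exact_mod_cast this
  · intro n
    simp only [Set.mem_setOf_eq]
    set m : ℤ := (n:ℤ) + 1 with hm
    have hm1 : 1 ≤ m := by omega
    refine ⟨by nlinarith, by nlinarith, by norm_num, by nlinarith, by nlinarith,
      by nlinarith, by nlinarith, by nlinarith, by nlinarith, by nlinarith, by nlinarith,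
      by nlinarith, by nlinarith, by nlinarith, by nlinarith, by ring, by ring, ?_⟩
    have h3 : Int.gcd (-1) (Int.gcd (2*m^2+4*m+1) (2*m^2+4*m+2)) = 1 := by
      simp [Int.gcd]
    rw [h3]
    simp [Int.gcd]
end

section
/- Let a₁, ..., aₙ and b₁, ..., bₙ be integers with Σaₖ² = Σbₖ². Then for any integer c, the 4n integers consisting of c − aₖ, c + aₖ (1 ≤ k ≤ n) together with −c + bₖ, −c − bₖ (1 ≤ k ≤ n) have sum zero and sum of cubes zero. -/
theorem square_pair_construction (n : ℕ) (a b : Fin n → ℤ)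
    (h : ∑ k, (a k) ^ 2 = ∑ k, (b k) ^ 2) (c : ℤ) :
    (∑ k, ((c - a k) + (c + a k) + (-c + b k) + (-c - b k)) = 0) ∧
      (∑ k, ((c - a k) ^ 3 + (c + a k) ^ 3 + (-c + b k) ^ 3 + (-c - b k) ^ 3) = 0) := by
  constructor
  · simp [add_comm, sub_eq_add_neg]
    exact Finset.sum_eq_zero fun k _ => by ring
  · have : ∀ k : Fin n, (c - a k) ^ 3 + (c + a k) ^ 3 + (-c + b k) ^ 3 + (-c - b k) ^ 3
        = 6 * c * ((a k) ^ 2 - (b k) ^ 2) := fun k => by ring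
    simp only [this, Finset.sum_sub_distrib, ← Finset.mul_sum, h]
    ring
end

section
/- For every integer b, if a² − (b+1)a + (b² − b) = 0 has an integer solution a, then −3b² + 6b + 1 ≥ 0; consequently the only pairs of positive integers (a, b) with a³ + b³ = (a + b)² are (1, 2), (2, 1), and (2, 2). -/
theorem cs_two_sets :
    (∀ b a : ℤ, a ^ 2 - (b + 1) * a + (b ^ 2 - b) = 0 → 0 ≤ -3 * b ^ 2 + 6 * b + 1) ∧
      ∀ a b : ℤ, 0 < a → 0 < b → a ^ 3 + b ^ 3 = (a + b) ^ 2 →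
        (a, b) = (1, 2) ∨ (a, b) = (2, 1) ∨ (a, b) = (2, 2) := by
  constructor
  · intro b a h
    nlinarith [sq_nonneg (2 * a - (b + 1))]
  · intro a b ha hb h
    have hne : a + b ≠ 0 := by omega
    have hab : a ^ 2 - a * b + b ^ 2 = a + b := by
      have h2 : (a + b) * (a ^ 2 - a * b + b ^ 2) = (a + b) * (a + b) := by ring_nf; nlinarith [h]
      exact mul_left_cancel₀ hne h2
    have hb2 : b ≤ 2 := by nlinarith [sq_nonneg (2 * a - (b + 1))]
    have ha2 : a ≤ 2 := by nlinarith [sq_nonneg (2 * b - (a + 1))]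
    interval_cases a <;> interval_cases b <;> simp_all
end

section
/- For every pair of positive integers (φ, ψ) with 9φ² − 5ψ² = 4, setting x = (φ + 3ψ)/2, y = (3ψ − φ)/2, z = −2ψ (noting φ and ψ have the same parity), one has x + y + z = ψ and x³ + y³ + z³ = ψ, hence x³ + y³ + z³ = x + y + z. -/
theorem chowla_construction (φ ψ x y z : ℤ) (hφ : 0 < φ) (hψ : 0 < ψ)
    (h : 9 * φ ^ 2 - 5 * ψ ^ 2 = 4)
    (hx : 2 * x = φ + 3 * ψ) (hy : 2 * y = 3 * ψ - φ) (hz : z = -2 * ψ) :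
    x + y + z = ψ ∧ x ^ 3 + y ^ 3 + z ^ 3 = ψ := by
  constructor
  · linarith
  · have h8 : 8 * (x ^ 3 + y ^ 3 + z ^ 3) = 8 * ψ := by
      have e1 : (2 * x) ^ 3 = (φ + 3 * ψ) ^ 3 := by rw [hx]
      have e2 : (2 * y) ^ 3 = (3 * ψ - φ) ^ 3 := by rw [hy]
      subst hz
      nlinarith [e1, e2, h, sq_nonneg ψ]
    linarith
end
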